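/- arXiv:chao-dyn/9709006 — 3 statements merged into one kernel-verified Lean document; each statement's English description precedes it below -/
import Mathlib

section
/- For any real y, mod2(2^k y) ∈ [-1/2,1/2) for all k ≥ 0 if and only if mod2(y) = 0. -/
/-- `mod2 x` is the unique point in `[-1,1)` congruent to `x` modulo 2. -/
noncomputable def mod2 (x : ℝ) : ℝ := x - 2 * ⌊(x + 1) / 2⌋

lemma mod2_add_two_int (x : ℝ) (n : ℤ) : mod2 (x + 2 * n) = mod2 x := by
  unfold mod2
  have h : (x + 2 * n + 1) / 2 = (x + 1) / 2 + n := by ring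
  rw [h, Int.floor_add_intCast]
  push_cast
  ring

lemma mod2_spec (x : ℝ) : x = mod2 x + 2 * (⌊(x + 1) / 2⌋ : ℤ) := by
  unfold mod2; ring

lemma mod2_eq_self {x : ℝ} (h : x ∈ Set.Ico (-1 : ℝ) 1) : mod2 x = x := by
  unfold mod2
  have : ⌊(x + 1) / 2⌋ = 0 := by
    rw [Int.floor_eq_zero_iff]
    constructor
    · have := h.1; simp only [Set.mem_Ico] at *; linarith
    · have := h.2; linarith
  rw [this]; push_cast; ring

/-- The doubling map on `ℝ/2ℤ` keeps a point in `[-1/2,1/2)` for all nonnegative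
iterates iff the point is the zero class. -/
theorem doubling_stays_in_middle_iff_zero (y : ℝ) :
    (∀ k : ℕ, mod2 (2 ^ k * y) ∈ Set.Ico (-(1:ℝ)/2) (1/2)) ↔ mod2 y = 0 := by
  constructor
  · intro h
    have key : ∀ k : ℕ, mod2 (2 ^ k * y) = 2 ^ k * mod2 y := by
      intro k
      induction k with
      | zero => simp
      | succ k ih =>
        have hk := h k
        set m := mod2 (2 ^ k * y) with hm
        obtain ⟨n, hn⟩ : ∃ n : ℤ, 2 ^ k * y = m + 2 * n :=
          ⟨⌊(2 ^ k * y + 1) / 2⌋, mod2_spec _⟩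
        have h2 : (2 : ℝ) ^ (k + 1) * y = 2 * m + 2 * (2 * n : ℤ) := by
          push_cast
          rw [pow_succ]
          nlinarith [hn]
        have hmem : (2 : ℝ) * m ∈ Set.Ico (-1 : ℝ) 1 := by
          simp only [Set.mem_Ico] at hk ⊢
          constructor <;> nlinarith [hk.1, hk.2]
        calc mod2 (2 ^ (k + 1) * y) = mod2 (2 * m + 2 * (2 * n : ℤ)) := by rw [h2]
          _ = mod2 (2 * m) := mod2_add_two_int _ _
          _ = 2 * m := mod2_eq_self hmem
          _ = 2 ^ (k + 1) * mod2 y := by rw [ih]; ring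
    by_contra hne
    have habs : |mod2 y| > 0 := abs_pos.mpr hne
    obtain ⟨k, hk⟩ := pow_unbounded_of_one_lt (1 / (2 * |mod2 y|)) (by norm_num : (1:ℝ) < 2)
    have hk2 : 2 ^ k * |mod2 y| > 1 / 2 := by
      rw [div_lt_iff₀ (by positivity)] at hk
      nlinarith
    have hmem := h k
    rw [key k] at hmem
    simp only [Set.mem_Ico] at hmem
    have : |2 ^ k * mod2 y| ≤ 1 / 2 := by
      rw [abs_le]; constructor <;> [linarith [hmem.1]; linarith [hmem.2]]
    rw [abs_mul, abs_of_pos (by positivity : (0:ℝ) < 2 ^ k)] at this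
    linarith
  · intro h k
    obtain ⟨n, hn⟩ : ∃ n : ℤ, y = 2 * n := by
      refine ⟨⌊(y + 1) / 2⌋, ?_⟩
      have := mod2_spec y
      rw [h] at this; linarith
    have : (2 : ℝ) ^ k * y = 0 + 2 * ((2 ^ k * n : ℤ) : ℝ) := by
      push_cast; rw [hn]; ring
    rw [this, mod2_add_two_int]
    have h0 : mod2 0 = 0 := mod2_eq_self (by norm_num)
    rw [h0]
    norm_num
end

section
/- The set of α ∈ (0,∞) such that there exist integers j ≥ 0 and p ≥ 0 with mod2(2^{i+n_i} α) ∈ [-1/2,1/2) for all i ≥ p, where n_i = 2^i - j - 1, has Lebesgue measure zero. -/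
open MeasureTheory
open scoped ENNReal

namespace EscapeAux

lemma floor_div_int' (y : ℝ) (d : ℤ) (hd : 0 < d) : ⌊y / (d : ℝ)⌋ = ⌊y⌋ / d := by
  have hd' : (0:ℝ) < (d:ℝ) := by exact_mod_cast hd
  have h1 : ((⌊y⌋ : ℤ) : ℝ) ≤ y := Int.floor_le y
  have h2 : y < ⌊y⌋ + 1 := Int.lt_floor_add_one y
  have hde := Int.mul_ediv_add_emod ⌊y⌋ d
  have hr0 := Int.emod_nonneg ⌊y⌋ (ne_of_gt hd)
  have hr1 := Int.emod_lt_of_pos ⌊y⌋ hd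
  rw [Int.floor_eq_iff]
  constructor
  · rw [le_div_iff₀ hd']
    have : ((d * (⌊y⌋ / d) : ℤ) : ℝ) ≤ (⌊y⌋ : ℝ) := by exact_mod_cast by omega
    push_cast at this ⊢
    linarith
  · rw [div_lt_iff₀ hd']
    have : ((⌊y⌋ : ℤ) : ℝ) + 1 ≤ ((d * (⌊y⌋ / d) + d : ℤ) : ℝ) := by exact_mod_cast by omega
    push_cast at this ⊢
    linarith

lemma floor_zpow_le (m L : ℤ) (h : m ≤ L) (x : ℝ) :
    ⌊(2:ℝ)^m * x⌋ = ⌊(2:ℝ)^L * x⌋ / 2 ^ (L - m).toNat := by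
  have hd : (0:ℤ) < 2 ^ (L - m).toNat := by positivity
  rw [← floor_div_int' ((2:ℝ)^L * x) _ hd]
  congr 1
  have hcast : (((2:ℤ) ^ (L - m).toNat : ℤ) : ℝ) = (2:ℝ) ^ (L - m) := by
    push_cast
    rw [← zpow_natCast (2:ℝ) (L - m).toNat, Int.toNat_of_nonneg (by omega)]
  rw [hcast, eq_div_iff (by positivity), mul_right_comm, ← zpow_add₀ (two_ne_zero)]
  norm_num

lemma floor_det {m L : ℤ} (h : m ≤ L) {x y : ℝ}
    (hxy : ⌊(2:ℝ)^L * x⌋ = ⌊(2:ℝ)^L * y⌋) : ⌊(2:ℝ)^m * x⌋ = ⌊(2:ℝ)^m * y⌋ := by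
  rw [floor_zpow_le m L h, floor_zpow_le m L h, hxy]

def Dset (m : ℤ) : Set ℝ := {x | ⌊(2:ℝ)^m * x⌋ % 4 = 0 ∨ ⌊(2:ℝ)^m * x⌋ % 4 = 3}

lemma measurable_floorMul (m : ℤ) : Measurable fun x : ℝ => ⌊(2:ℝ)^m * x⌋ :=
  Int.measurable_floor.comp (measurable_const.mul measurable_id)

lemma measurableSet_Dset (m : ℤ) : MeasurableSet (Dset m) := by
  have : Dset m = (fun x : ℝ => ⌊(2:ℝ)^m * x⌋) ⁻¹' {n : ℤ | n % 4 = 0 ∨ n % 4 = 3} := rfl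
  rw [this]
  exact measurable_floorMul m ((Set.to_countable _).measurableSet)

lemma halving (m' : ℤ) (E : Set ℝ) (hE : MeasurableSet E)
    (hgrid : ∀ x y : ℝ, ⌊(2:ℝ)^(m'-1) * x⌋ = ⌊(2:ℝ)^(m'-1) * y⌋ → (x ∈ E ↔ y ∈ E)) :
    2 * volume (E ∩ Dset m') = volume E := by
  set δ : ℝ := (2:ℝ)^(-m') with hδ
  set F : ℝ → ℤ := fun x => ⌊(2:ℝ)^m' * x⌋ with hF
  have hFmeas : Measurable F := measurable_floorMul m'
  have key1 : ∀ x : ℝ, F (x + δ) = F x + 1 := by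
    intro x
    have hx : (2:ℝ)^m' * (x + δ) = 2^m' * x + 1 := by
      rw [mul_add, hδ, ← zpow_add₀ (two_ne_zero : (2:ℝ) ≠ 0)]
      norm_num
    simp only [hF, hx, Int.floor_add_one]
  have keyhalf : ∀ x : ℝ, ⌊(2:ℝ)^(m'-1) * x⌋ = F x / 2 := by
    intro x
    rw [floor_zpow_le (m'-1) m' (by omega) x]
    norm_num
    rfl
  have key2 : ∀ x : ℝ, F x % 2 = 0 → (x + δ ∈ E ↔ x ∈ E) := by
    intro x hx
    apply hgrid
    rw [keyhalf, keyhalf, key1]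
    omega
  set C : ℤ → Set ℝ := fun r => {x | x ∈ E ∧ F x % 4 = r} with hC
  have hCmeas : ∀ r, MeasurableSet (C r) := fun r =>
    hE.inter (hFmeas ((Set.to_countable _).measurableSet) :
      MeasurableSet (F ⁻¹' {n : ℤ | n % 4 = r}))
  have hpre01 : C 0 = (fun x => x + δ) ⁻¹' (C 1) := by
    ext x
    simp only [hC, Set.mem_setOf_eq, Set.mem_preimage, key1]
    constructor
    · rintro ⟨hxE, hx4⟩
      exact ⟨(key2 x (by omega)).mpr hxE, by omega⟩
    · rintro ⟨hxE, hx4⟩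
      exact ⟨(key2 x (by omega)).mp hxE, by omega⟩
  have hpre23 : C 2 = (fun x => x + δ) ⁻¹' (C 3) := by
    ext x
    simp only [hC, Set.mem_setOf_eq, Set.mem_preimage, key1]
    constructor
    · rintro ⟨hxE, hx4⟩
      exact ⟨(key2 x (by omega)).mpr hxE, by omega⟩
    · rintro ⟨hxE, hx4⟩
      exact ⟨(key2 x (by omega)).mp hxE, by omega⟩
  have hv01 : volume (C 0) = volume (C 1) := by
    rw [hpre01, measure_preimage_add_right volume δ (C 1)]
  have hv23 : volume (C 2) = volume (C 3) := by
    rw [hpre23, measure_preimage_add_right volume δ (C 3)]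
  have h03 : E ∩ Dset m' = C 0 ∪ C 3 := by
    ext x
    simp only [hC, Set.mem_inter_iff, Set.mem_union, Set.mem_setOf_eq, Dset, hF]
    tauto
  have h12 : E \ Dset m' = C 1 ∪ C 2 := by
    ext x
    simp only [hC, Set.mem_diff, Set.mem_union, Set.mem_setOf_eq, Dset, hF]
    have := Int.emod_nonneg (⌊(2:ℝ)^m' * x⌋) (by norm_num : (4:ℤ) ≠ 0)
    have := Int.emod_lt_of_pos (⌊(2:ℝ)^m' * x⌋) (by norm_num : (0:ℤ) < 4)
    constructor
    · rintro ⟨hxE, hx⟩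
      push_neg at hx
      have h12' : ⌊(2:ℝ)^m' * x⌋ % 4 = 1 ∨ ⌊(2:ℝ)^m' * x⌋ % 4 = 2 := by omega
      rcases h12' with h' | h'
      · exact Or.inl ⟨hxE, h'⟩
      · exact Or.inr ⟨hxE, h'⟩
    · rintro (⟨hxE, hx⟩ | ⟨hxE, hx⟩) <;> exact ⟨hxE, by omega⟩
  have hd03 : Disjoint (C 0) (C 3) := by
    rw [Set.disjoint_left]
    rintro x ⟨_, h0⟩ ⟨_, h3⟩
    omega
  have hd12 : Disjoint (C 1) (C 2) := by
    rw [Set.disjoint_left]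
    rintro x ⟨_, h1⟩ ⟨_, h2⟩
    omega
  have hvD : volume (E ∩ Dset m') = volume (C 0) + volume (C 3) := by
    rw [h03, measure_union hd03 (hCmeas 3)]
  have hvDc : volume (E \ Dset m') = volume (C 1) + volume (C 2) := by
    rw [h12, measure_union hd12 (hCmeas 2)]
  have htot : volume (E ∩ Dset m') + volume (E \ Dset m') = volume E :=
    measure_inter_add_diff E (measurableSet_Dset m')
  calc 2 * volume (E ∩ Dset m') = volume (E ∩ Dset m') + volume (E ∩ Dset m') := two_mul _
    _ = volume (E ∩ Dset m') + (volume (C 0) + volume (C 3)) := by rw [hvD]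
    _ = volume (E ∩ Dset m') + (volume (C 1) + volume (C 2)) := by rw [hv01, hv23]
    _ = volume (E ∩ Dset m') + volume (E \ Dset m') := by rw [hvDc]
    _ = volume E := htot

lemma grid_Ico {L : ℤ} (hL : 0 ≤ L) (w : ℕ) {x y : ℝ}
    (h : ⌊(2:ℝ)^L * x⌋ = ⌊(2:ℝ)^L * y⌋) :
    x ∈ Set.Ico (0:ℝ) (2^w) ↔ y ∈ Set.Ico (0:ℝ) (2^w) := by
  have hp : (0:ℝ) < (2:ℝ)^L := by positivity
  have hcast : (((2:ℤ) ^ (L.toNat + w) : ℤ) : ℝ) = (2:ℝ)^L * 2^w := by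
    push_cast
    rw [pow_add, ← zpow_natCast (2:ℝ) L.toNat, Int.toNat_of_nonneg hL]
  have char : ∀ z : ℝ, z ∈ Set.Ico (0:ℝ) (2^w) ↔
      (0 ≤ ⌊(2:ℝ)^L * z⌋ ∧ ⌊(2:ℝ)^L * z⌋ < 2 ^ (L.toNat + w)) := by
    intro z
    constructor
    · rintro ⟨h0, h1⟩
      refine ⟨Int.le_floor.mpr (by push_cast; positivity), Int.floor_lt.mpr ?_⟩
      rw [hcast]
      exact (mul_lt_mul_iff_right₀ hp).mpr h1
    · rintro ⟨h0, h1⟩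
      have hz0 : (0:ℝ) ≤ (2:ℝ)^L * z := by exact_mod_cast Int.le_floor.mp h0
      have hz1 : (2:ℝ)^L * z < (2:ℝ)^L * 2^w := by
        have := Int.floor_lt.mp h1
        rwa [hcast] at this
      exact ⟨nonneg_of_mul_nonneg_right hz0 hp, lt_of_mul_lt_mul_left hz1 hp.le⟩
  rw [char, char, h]

lemma mod2_iff (x : ℝ) :
    mod2 x ∈ Set.Ico (-(1:ℝ)/2) (1/2) ↔ (⌊2*x⌋ % 4 = 0 ∨ ⌊2*x⌋ % 4 = 3) := by
  have h2x : ((⌊2*x⌋ : ℤ) : ℝ) ≤ 2*x := Int.floor_le (2*x)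
  have h2x' : 2*x < ⌊2*x⌋ + 1 := Int.lt_floor_add_one (2*x)
  have hk : ⌊(x+1)/2⌋ = (⌊2*x⌋ + 2) / 4 := by
    have hh : (x+1)/2 = (2*x + 2) / ((4:ℤ) : ℝ) := by push_cast; ring
    rw [hh, floor_div_int' _ 4 (by norm_num)]
    congr 1
    rw [show (2:ℝ)*x + 2 = 2*x + ((2:ℤ):ℝ) by push_cast; ring, Int.floor_add_intCast]
  simp only [mod2, Set.mem_Ico, hk]
  set n := ⌊2*x⌋ with hn
  set k := (n + 2) / 4 with hk4
  have hke := Int.mul_ediv_add_emod (n + 2) 4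
  have hkr0 := Int.emod_nonneg (n + 2) (by norm_num : (4:ℤ) ≠ 0)
  have hkr1 := Int.emod_lt_of_pos (n + 2) (by norm_num : (0:ℤ) < 4)
  constructor
  · rintro ⟨hlo, hhi⟩
    have hub : n < 4*k + 1 := by
      apply Int.lt_of_lt_of_le (Int.floor_lt.mpr ?_) (le_refl _)
      push_cast
      linarith
    have hlb : 4*k - 1 ≤ n := by
      apply Int.le_floor.mpr
      push_cast
      linarith
    omega
  · intro h
    have hcase : n = 4*k - 1 ∨ n = 4*k := by omega
    have h1 : (4*(k:ℝ) - 1) ≤ 2*x := by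
      have : ((4*k - 1 : ℤ) : ℝ) ≤ (n : ℝ) := by exact_mod_cast by omega
      push_cast at this
      linarith
    have h2 : 2*x < 4*(k:ℝ) + 1 := by
      have : ((n : ℤ) : ℝ) + 1 ≤ ((4*k + 1 : ℤ) : ℝ) := by exact_mod_cast by omega
      push_cast at this
      linarith
    constructor <;> linarith

end EscapeAux

open EscapeAux in
/-- The set of directions `α > 0` for which, for some `j, p ≥ 0`,
`mod2 (2^(i + nᵢ) α) ∈ [-1/2, 1/2)` for all `i ≥ p`, where `nᵢ = 2^i - j - 1`,
has Lebesgue measure zero. -/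
theorem escape_from_vertex_null :
    volume {α : ℝ | 0 < α ∧ ∃ j p : ℕ, ∀ i : ℕ, p ≤ i →
      mod2 ((2 : ℝ) ^ ((i : ℤ) + 2 ^ i - (j : ℤ) - 1) * α) ∈
        Set.Ico (-(1:ℝ)/2) (1/2)} = 0 := by
  set T : ℕ → ℕ → ℕ → Set ℝ := fun j p w =>
    Set.Ico (0:ℝ) (2^w) ∩ {α | ∀ i : ℕ, p ≤ i → α ∈ Dset ((i : ℤ) + 2 ^ i - (j : ℤ) - 1 + 1)}
    with hT
  have hTnull : ∀ j p w, volume (T j p w) = 0 := by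
    intro j p w
    set P : ℕ := max p (j + 1) with hP
    set M : ℕ → ℤ := fun k => ((P + k : ℕ) : ℤ) + 2 ^ (P + k) - (j : ℤ) - 1 + 1 with hM
    have hMge : ∀ k, 2 ≤ M k := by
      intro k
      have h1 : (1:ℤ) ≤ 2 ^ (P + k) := one_le_pow₀ (by norm_num)
      have h2 : (j:ℤ) + 1 ≤ ((P + k : ℕ) : ℤ) := by
        have : j + 1 ≤ P + k := le_trans (le_max_right p (j+1)) (Nat.le_add_right P k)
        exact_mod_cast this
      simp only [hM]
      omega
    have hMmono : ∀ k k', k < k' → M k ≤ M k' - 1 := by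
      intro k k' hkk
      have h1 : ((P + k : ℕ) : ℤ) + 1 ≤ ((P + k' : ℕ) : ℤ) := by exact_mod_cast by omega
      have h2 : (2:ℤ) ^ (P + k) + 2 ^ (P + k) ≤ 2 ^ (P + k') := by
        have : (2:ℤ) ^ (P + k + 1) ≤ 2 ^ (P + k') :=
          pow_le_pow_right₀ (by norm_num) (by omega)
        rw [pow_succ] at this
        omega
      have h3 : (1:ℤ) ≤ 2 ^ (P + k) := one_le_pow₀ (by norm_num)
      simp only [hM]
      omega
    set E : ℕ → Set ℝ := fun n =>
      Set.Ico (0:ℝ) (2^w) ∩ ⋂ k ∈ Finset.range n, Dset (M k) with hE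
    have hEmeas : ∀ n, MeasurableSet (E n) := by
      intro n
      exact measurableSet_Ico.inter
        (MeasurableSet.biInter (Set.to_countable _) fun k _ => measurableSet_Dset (M k))
    have hgrid : ∀ n x y, ⌊(2:ℝ)^(M n - 1) * x⌋ = ⌊(2:ℝ)^(M n - 1) * y⌋ →
        (x ∈ E n ↔ y ∈ E n) := by
      intro n x y hxy
      simp only [hE, Set.mem_inter_iff, Set.mem_iInter, Finset.mem_range]
      constructor <;> rintro ⟨hI, hD⟩
      · refine ⟨(grid_Ico (by have := hMge n; omega) w hxy).mp hI, fun k hk => ?_⟩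
        have hfl := floor_det (hMmono k n hk) hxy
        have := hD k hk
        simp only [Dset, Set.mem_setOf_eq] at this ⊢
        rw [← hfl]
        exact this
      · refine ⟨(grid_Ico (by have := hMge n; omega) w hxy).mpr hI, fun k hk => ?_⟩
        have hfl := floor_det (hMmono k n hk) hxy
        have := hD k hk
        simp only [Dset, Set.mem_setOf_eq] at this ⊢
        rw [hfl]
        exact this
    have hstep : ∀ n, E (n + 1) = E n ∩ Dset (M n) := by
      intro n
      ext x
      simp only [hE, Set.mem_inter_iff, Set.mem_iInter, Finset.mem_range, Nat.lt_succ_iff_lt_or_eq]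
      constructor
      · rintro ⟨hI, hD⟩
        exact ⟨⟨hI, fun k hk => hD k (Or.inl hk)⟩, hD n (Or.inr rfl)⟩
      · rintro ⟨⟨hI, hD⟩, hn⟩
        refine ⟨hI, fun k hk => ?_⟩
        rcases hk with hk | rfl
        · exact hD k hk
        · exact hn
    have hbound : ∀ n, volume (E n) ≤ (2:ℝ≥0∞)^w * (2⁻¹ : ℝ≥0∞)^n := by
      intro n
      induction n with
      | zero =>
        have : E 0 ⊆ Set.Ico (0:ℝ) (2^w) := Set.inter_subset_left
        refine le_trans (measure_mono this) ?_
        rw [Real.volume_Ico]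
        simp only [sub_zero, pow_zero, mul_one]
        rw [← ENNReal.ofReal_ofNat 2, ← ENNReal.ofReal_pow (by norm_num)]
      | succ n ih =>
        have hhalf := halving (M n) (E n) (hEmeas n) (hgrid n)
        rw [hstep n]
        have h2B : (2:ℝ≥0∞) * ((2:ℝ≥0∞)^w * (2⁻¹ : ℝ≥0∞)^(n+1)) = (2:ℝ≥0∞)^w * (2⁻¹:ℝ≥0∞)^n := by
          rw [pow_succ]
          calc (2:ℝ≥0∞) * ((2:ℝ≥0∞)^w * ((2⁻¹:ℝ≥0∞)^n * 2⁻¹))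
              = (2:ℝ≥0∞)^w * (2⁻¹:ℝ≥0∞)^n * (2 * 2⁻¹) := by ring
            _ = (2:ℝ≥0∞)^w * (2⁻¹:ℝ≥0∞)^n := by
                rw [ENNReal.mul_inv_cancel (by norm_num) (by norm_num), mul_one]
        have : (2:ℝ≥0∞) * volume (E n ∩ Dset (M n)) ≤
            (2:ℝ≥0∞) * ((2:ℝ≥0∞)^w * (2⁻¹ : ℝ≥0∞)^(n+1)) := by
          rw [hhalf, h2B]
          exact ih
        exact (ENNReal.mul_le_mul_iff_right (by norm_num) (by norm_num)).mp this
    have hTE : ∀ n, T j p w ⊆ E n := by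
      intro n α hα
      obtain ⟨hI, hD⟩ := hα
      refine ⟨hI, ?_⟩
      simp only [Set.mem_iInter, Finset.mem_range]
      intro k _
      have := hD (P + k) (le_trans (le_max_left p (j+1)) (Nat.le_add_right P k))
      exact this
    have htend : Filter.Tendsto (fun n => (2:ℝ≥0∞)^w * (2⁻¹ : ℝ≥0∞)^n)
        Filter.atTop (nhds 0) := by
      have h0 : Filter.Tendsto (fun n => (2⁻¹ : ℝ≥0∞)^n) Filter.atTop (nhds 0) :=
        ENNReal.tendsto_pow_atTop_nhds_zero_of_lt_one (by
          rw [ENNReal.inv_lt_one]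
          norm_num)
      have := ENNReal.Tendsto.const_mul (a := (2:ℝ≥0∞)^w) h0
        (Or.inr (ENNReal.pow_ne_top ENNReal.ofNat_ne_top))
      simpa using this
    have hle : ∀ n, volume (T j p w) ≤ (2:ℝ≥0∞)^w * (2⁻¹ : ℝ≥0∞)^n :=
      fun n => le_trans (measure_mono (hTE n)) (hbound n)
    exact le_antisymm (ge_of_tendsto' htend hle) zero_le
  have hsub : {α : ℝ | 0 < α ∧ ∃ j p : ℕ, ∀ i : ℕ, p ≤ i →
      mod2 ((2 : ℝ) ^ ((i : ℤ) + 2 ^ i - (j : ℤ) - 1) * α) ∈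
        Set.Ico (-(1:ℝ)/2) (1/2)} ⊆ ⋃ j : ℕ, ⋃ p : ℕ, ⋃ w : ℕ, T j p w := by
    rintro α ⟨hpos, j, p, hcond⟩
    obtain ⟨w, hw⟩ := pow_unbounded_of_one_lt α (one_lt_two : (1:ℝ) < 2)
    simp only [Set.mem_iUnion]
    refine ⟨j, p, w, ⟨hpos.le, hw⟩, fun i hi => ?_⟩
    set m : ℤ := (i : ℤ) + 2 ^ i - (j : ℤ) - 1 with hm
    have h1 := (mod2_iff ((2:ℝ)^m * α)).mp (hcond i hi)
    have h2 : (2:ℝ)^(m + 1) * α = 2 * ((2:ℝ)^m * α) := by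
      rw [zpow_add_one₀ (two_ne_zero : (2:ℝ) ≠ 0)]
      ring
    simp only [Dset, Set.mem_setOf_eq, h2]
    exact h1
  exact measure_mono_null hsub
    (measure_iUnion_null fun j => measure_iUnion_null fun p =>
      measure_iUnion_null fun w => hTnull j p w)
end

section
/- For all integers n_1 ≥ 2 and d ≥ 2, there is no integer p with 1/n_1 = 1/2 + 2^{n_1}/(d·2^{n_1+d}) + 2p or 1/n_1 = 1 + 2^{n_1}/(d·2^{n_1+d}) + 2p. -/
/-- Arithmetic core of the proof that no direction lacks escape orbits: for integers
`n₁ ≥ 2` and `d ≥ 2` there is no integer `p` with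
`1/n₁ = 1/2 + 2^{n₁}/(d·2^{n₁+d}) + 2p` or `1/n₁ = 1 + 2^{n₁}/(d·2^{n₁+d}) + 2p`. -/
theorem no_double_generalized_diagonal (n₁ d : ℕ) (hn₁ : 2 ≤ n₁) (hd : 2 ≤ d) :
    ¬ ∃ p : ℤ,
      (1 / (n₁ : ℝ) = 1/2 + 2 ^ n₁ / ((d : ℝ) * 2 ^ (n₁ + d)) + 2 * p ∨
       1 / (n₁ : ℝ) = 1 + 2 ^ n₁ / ((d : ℝ) * 2 ^ (n₁ + d)) + 2 * p) := by
  rintro ⟨p, hp⟩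
  have hn₁R : (2:ℝ) ≤ n₁ := by exact_mod_cast hn₁
  have hn₁0 : (0:ℝ) < n₁ := by linarith
  -- bounds on x = 1/n₁
  have hx0 : (0:ℝ) < 1 / n₁ := by positivity
  have hx2 : (1:ℝ) / n₁ ≤ 1/2 := by
    rw [div_le_div_iff₀ hn₁0 (by norm_num)]; linarith
  -- the middle term y
  set y : ℝ := 2 ^ n₁ / ((d : ℝ) * 2 ^ (n₁ + d)) with hy
  have hdpos : (0:ℝ) < d := by exact_mod_cast lt_of_lt_of_le (by norm_num) hd
  have hy0 : (0:ℝ) < y := by positivity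
  have h8 : (8:ℕ) ≤ d * 2 ^ d := by
    calc (8:ℕ) = 2 * 2 ^ 2 := by norm_num
    _ ≤ d * 2 ^ d := Nat.mul_le_mul hd (Nat.pow_le_pow_right (by norm_num) hd)
  have h8R : (8:ℝ) ≤ (d:ℝ) * 2 ^ d := by exact_mod_cast h8
  have hsplit : (d:ℝ) * 2 ^ (n₁ + d) = ((d:ℝ) * 2 ^ d) * 2 ^ n₁ := by
    rw [pow_add]; ring
  have hy8 : y ≤ 1/8 := by
    rw [hy, hsplit, div_le_div_iff₀ (by positivity) (by norm_num)]
    have hpow : (0:ℝ) < (2:ℝ) ^ n₁ := by positivity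
    nlinarith
  rcases hp with h | h
  · -- 2p = 1/n₁ - 1/2 - y ∈ (-1, 0)
    have h1 : (2:ℝ) * p < 0 := by linarith
    have h2 : (-1:ℝ) < 2 * p := by linarith
    have hp1 : (p:ℝ) < 0 := by linarith
    have hp2 : (-1:ℝ) < p := by linarith
    have : p < 0 := by exact_mod_cast hp1
    have : (-1:ℤ) < p := by exact_mod_cast hp2
    omega
  · -- 2p = 1/n₁ - 1 - y ∈ (-9/8, -1/2)
    have h1 : (2:ℝ) * p < -1/2 := by linarith
    have h2 : (-2:ℝ) < 2 * p := by linarith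
    have hp1 : (p:ℝ) < 0 := by linarith
    have hp2 : (-1:ℝ) < p := by linarith
    have : p < 0 := by exact_mod_cast hp1
    have : (-1:ℤ) < p := by exact_mod_cast hp2
    omega
end
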